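/- If σ is a restrictive permutation, then σ contains exactly one copy of the Fishburn pattern f, i.e. there is exactly one pair of indices (j, k) with j+1 < k, σ_j = σ_k + 1, and σ_{j+1} > σ_j. -/

import Mathlib

/-- Two lists of naturals have the same length and the same relative order
(including ties). -/
def SameRelOrder (u v : List ℕ) : Prop :=
  u.length = v.length ∧
    ∀ i j, i < u.length → j < u.length →
      (u.getD i 0 < u.getD j 0 ↔ v.getD i 0 < v.getD j 0)

/-- `α` contains `β` as a pattern: some subsequence of `α` has the same length
and relative order as `β`. -/
def SeqContains (α β : List ℕ) : Prop :=
  ∃ γ : List ℕ, γ.Sublist α ∧ SameRelOrder γ β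

/-- A copy of the Fishburn pattern `f` in `l`: indices `j`, `k` with `j + 1 < k`,
`l j = l k + 1` and `l (j+1) > l j`. -/
def HasFishburnCopy (l : List ℕ) : Prop :=
  ∃ j k, j + 1 < k ∧ k < l.length ∧
    l.getD j 0 = l.getD k 0 + 1 ∧ l.getD j 0 < l.getD (j + 1) 0

/-- A Fishburn permutation contains no copy of the Fishburn pattern `f`. -/
def FishburnFree (l : List ℕ) : Prop := ¬ HasFishburnCopy l

/-- `l` is a permutation of `1, …, n`, written in one-line notation. -/
def IsPermList (n : ℕ) (l : List ℕ) : Prop := l.Perm (List.range' 1 n)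

/-- The set of Fishburn permutations of length `n` avoiding each pattern in `pats`. -/
def FishburnSet (n : ℕ) (pats : List (List ℕ)) : Set (List ℕ) :=
  {l | IsPermList n l ∧ FishburnFree l ∧ ∀ p ∈ pats, ¬ SeqContains l p}

/-- The set of all permutations of length `n` avoiding each pattern in `pats`. -/
def PermSet (n : ℕ) (pats : List (List ℕ)) : Set (List ℕ) :=
  {l | IsPermList n l ∧ ∀ p ∈ pats, ¬ SeqContains l p}

/-- The number of ascents of a sequence. -/
def ascCount (l : List ℕ) : ℕ :=
  ((Finset.range l.length).filter
    (fun i => i + 1 < l.length ∧ l.getD i 0 < l.getD (i + 1) 0)).card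

/-- `l` is an ascent sequence. -/
def IsAscentSeq (l : List ℕ) : Prop :=
  (0 < l.length → l.getD 0 0 = 0) ∧
    ∀ j, 0 < j → j < l.length → l.getD j 0 ≤ 1 + ascCount (l.take j)

/-- The set of ascent sequences of length `n` avoiding each pattern in `pats`. -/
def AscentSeqSet (n : ℕ) (pats : List (List ℕ)) : Set (List ℕ) :=
  {l | l.length = n ∧ IsAscentSeq l ∧ ∀ p ∈ pats, ¬ SeqContains l p}

/-- A permutation is unrestrictive if it avoids 123, contains a copy of the
Fishburn pattern `f`, and contains at least one of 2413 and 3412. -/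
def Unrestrictive (σ : List ℕ) : Prop :=
  ¬ SeqContains σ [1, 2, 3] ∧ HasFishburnCopy σ ∧
    (SeqContains σ [2, 4, 1, 3] ∨ SeqContains σ [3, 4, 1, 2])

/-- A permutation is restrictive if it avoids 123, contains a copy of the
Fishburn pattern `f`, and avoids both 2413 and 3412. -/
def Restrictive (σ : List ℕ) : Prop :=
  ¬ SeqContains σ [1, 2, 3] ∧ HasFishburnCopy σ ∧
    ¬ SeqContains σ [2, 4, 1, 3] ∧ ¬ SeqContains σ [3, 4, 1, 2]

/-!
Two ascents at positions `j < j'` of a permutation avoiding 123, 2413 and 3412 are impossible: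
adjacent ascents form a 123, and otherwise, writing `a b` and `c d` for the two ascents, avoiding
123 forces `c < a` and `d < b`, after which `d < a` gives a 3412 and `a < d` a 2413. So a
restrictive permutation has a single ascent, which is the first position `j` of every copy of `f`,
and then `k` is the position of the value `σ_j - 1`.
-/

theorem List.map_getD_range_length {α : Type*} (l : List α) (d : α) :
    (List.range l.length).map (l.getD · d) = l :=
  List.ext_getElem (by simp) fun i _ hi => by simp [List.getElem?_eq_getElem hi]

theorem List.map_getD_sublist {α : Type*} (l : List α) (d : α) {idx : List ℕ}
    (hidx : idx.Pairwise (· < ·)) (hlt : ∀ i ∈ idx, i < l.length) :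
    (idx.map (l.getD · d)).Sublist l := by
  have hsub : idx.Sublist (List.range l.length) :=
    List.sublist_of_subperm_of_pairwise
      (List.subperm_of_subset hidx.nodup fun i hi => List.mem_range.2 (hlt i hi))
      hidx List.pairwise_lt_range
  simpa only [List.map_getD_range_length] using hsub.map (l.getD · d)

theorem List.Nodup.getD_inj {α : Type*} {l : List α} (hl : l.Nodup) {d : α} {i j : ℕ}
    (hi : i < l.length) (hj : j < l.length) (h : l.getD i d = l.getD j d) : i = j := by
  rw [List.getD_eq_getElem _ _ hi, List.getD_eq_getElem _ _ hj] at h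
  exact hl.getElem_inj_iff.mp h

theorem sameRelOrder_123 {a b c : ℕ} (hab : a < b) (hbc : b < c) :
    SameRelOrder [a, b, c] [1, 2, 3] := by
  refine ⟨rfl, fun i j hi hj => ?_⟩
  simp only [List.length_cons, List.length_nil] at hi hj
  interval_cases i <;> interval_cases j <;> simp [List.getD] <;> omega

theorem sameRelOrder_2413 {a b c d : ℕ} (hca : c < a) (had : a < d) (hdb : d < b) :
    SameRelOrder [a, b, c, d] [2, 4, 1, 3] := by
  refine ⟨rfl, fun i j hi hj => ?_⟩
  simp only [List.length_cons, List.length_nil] at hi hj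
  interval_cases i <;> interval_cases j <;> simp [List.getD] <;> omega

theorem sameRelOrder_3412 {a b c d : ℕ} (hcd : c < d) (hda : d < a) (hab : a < b) :
    SameRelOrder [a, b, c, d] [3, 4, 1, 2] := by
  refine ⟨rfl, fun i j hi hj => ?_⟩
  simp only [List.length_cons, List.length_nil] at hi hj
  interval_cases i <;> interval_cases j <;> simp [List.getD] <;> omega

section Patterns

variable {l : List ℕ} {i₁ i₂ i₃ i₄ : ℕ}

theorem seqContains_123 (h₁₂ : i₁ < i₂) (h₂₃ : i₂ < i₃) (h₃ : i₃ < l.length)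
    (hv₁₂ : l.getD i₁ 0 < l.getD i₂ 0) (hv₂₃ : l.getD i₂ 0 < l.getD i₃ 0) :
    SeqContains l [1, 2, 3] :=
  ⟨[i₁, i₂, i₃].map (l.getD · 0),
    l.map_getD_sublist 0 (by simp; omega) (by simp; omega), sameRelOrder_123 hv₁₂ hv₂₃⟩

theorem seqContains_2413 (h₁₂ : i₁ < i₂) (h₂₃ : i₂ < i₃) (h₃₄ : i₃ < i₄) (h₄ : i₄ < l.length)
    (hv₃₁ : l.getD i₃ 0 < l.getD i₁ 0) (hv₁₄ : l.getD i₁ 0 < l.getD i₄ 0)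
    (hv₄₂ : l.getD i₄ 0 < l.getD i₂ 0) :
    SeqContains l [2, 4, 1, 3] :=
  ⟨[i₁, i₂, i₃, i₄].map (l.getD · 0),
    l.map_getD_sublist 0 (by simp; omega) (by simp; omega), sameRelOrder_2413 hv₃₁ hv₁₄ hv₄₂⟩

theorem seqContains_3412 (h₁₂ : i₁ < i₂) (h₂₃ : i₂ < i₃) (h₃₄ : i₃ < i₄) (h₄ : i₄ < l.length)
    (hv₃₄ : l.getD i₃ 0 < l.getD i₄ 0) (hv₄₁ : l.getD i₄ 0 < l.getD i₁ 0)
    (hv₁₂ : l.getD i₁ 0 < l.getD i₂ 0) :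
    SeqContains l [3, 4, 1, 2] :=
  ⟨[i₁, i₂, i₃, i₄].map (l.getD · 0),
    l.map_getD_sublist 0 (by simp; omega) (by simp; omega), sameRelOrder_3412 hv₃₄ hv₄₁ hv₁₂⟩

end Patterns

theorem lt_length_of_getD_lt_getD_succ {l : List ℕ} {j : ℕ} (h : l.getD j 0 < l.getD (j + 1) 0) :
    j + 1 < l.length := by
  by_contra! hle
  rw [List.getD_eq_default _ _ hle] at h
  exact Nat.not_lt_zero _ h

theorem ascent_unique {l : List ℕ} (hl : l.Nodup) (h123 : ¬ SeqContains l [1, 2, 3])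
    (h2413 : ¬ SeqContains l [2, 4, 1, 3]) (h3412 : ¬ SeqContains l [3, 4, 1, 2]) {j j' : ℕ}
    (ha : l.getD j 0 < l.getD (j + 1) 0) (ha' : l.getD j' 0 < l.getD (j' + 1) 0) : j = j' := by
  wlog hjj' : j < j' generalizing j j'
  · obtain h | rfl := (not_lt.mp hjj').lt_or_eq
    exacts [(this ha' ha h).symm, rfl]
  have hlen := lt_length_of_getD_lt_getD_succ ha'
  have hne : ∀ p q, p < q → q < l.length → l.getD p 0 ≠ l.getD q 0 :=
    fun _ _ hpq hq h => hpq.ne (hl.getD_inj (hpq.trans hq) hq h)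
  obtain rfl | hgap : j + 1 = j' ∨ j + 1 < j' := (Nat.succ_le_of_lt hjj').eq_or_lt
  · exact (h123 (seqContains_123 (by omega) (by omega) hlen ha ha')).elim
  have hca : l.getD j' 0 < l.getD j 0 := by
    by_contra! h
    exact h123 (seqContains_123 hjj' (by omega) hlen ((hne j j' hjj' (by omega)).lt_of_le h) ha')
  have hdb : l.getD (j' + 1) 0 < l.getD (j + 1) 0 := by
    by_contra! h
    exact h123 (seqContains_123 (by omega) (by omega) hlen ha
      ((hne (j + 1) (j' + 1) (by omega) hlen).lt_of_le h))
  rcases (hne j (j' + 1) (by omega) hlen).lt_or_gt with had | hda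
  · exact (h2413 (seqContains_2413 (by omega) hgap (by omega) hlen hca had hdb)).elim
  · exact (h3412 (seqContains_3412 (by omega) hgap (by omega) hlen ha' hda ha)).elim

theorem stmt12 (m : ℕ) (σ : List ℕ) (hσ : IsPermList m σ) (hr : Restrictive σ) :
    ∃! jk : ℕ × ℕ, jk.1 + 1 < jk.2 ∧ jk.2 < σ.length ∧
      σ.getD jk.1 0 = σ.getD jk.2 0 + 1 ∧ σ.getD jk.1 0 < σ.getD (jk.1 + 1) 0 := by
  obtain ⟨h123, ⟨j₀, k₀, hjk₀, hk₀, hval₀, hasc₀⟩, h2413, h3412⟩ := hr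
  have hnd : σ.Nodup := hσ.nodup_iff.mpr (List.nodup_range')
  refine ⟨(j₀, k₀), ⟨hjk₀, hk₀, hval₀, hasc₀⟩, ?_⟩
  rintro ⟨j, k⟩ ⟨-, hk, hval, hasc⟩
  obtain rfl : j = j₀ := ascent_unique hnd h123 h2413 h3412 hasc hasc₀
  obtain rfl : k = k₀ := hnd.getD_inj hk hk₀ (Nat.succ_injective (hval.symm.trans hval₀))
  rfl
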